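/- For fixed b ∈ ℝ, the function t ↦ Φ⁻¹(Φ(t)/Φ(b)) defined on (-∞, b) is not concave. (This shows Ehrhard's inequality fails for the Gaussian measure conditioned on a half-line, and hence for general CD(1,∞) measures.) -/

import Mathlib

/-!
A concave function on `(-∞, b)` is bounded above near `b`: its slopes decrease, so on `(b - 1, b)`
it lies below the chord through `b - 2` and `b - 1`. But as `t → b⁻` we have `Φ(t)/Φ(b) → 1⁻`,
hence `Φ⁻¹(Φ(t)/Φ(b)) → +∞`.
-/

open Real Set

/-- Standard Gaussian density. -/
noncomputable def phi (t : ℝ) : ℝ := (Real.sqrt (2 * Real.pi))⁻¹ * Real.exp (-t ^ 2 / 2)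

/-- Standard Gaussian cumulative distribution function. -/
noncomputable def Phi (t : ℝ) : ℝ := ∫ s in Set.Iic t, phi s

open MeasureTheory Filter Topology

theorem ConcaveOn.not_tendsto_atTop_nhdsLT {f : ℝ → ℝ} {b : ℝ} (hf : ConcaveOn ℝ (Iio b) f) :
    ¬ Tendsto f (𝓝[<] b) atTop := by
  intro htop
  have hbound : ∀ t ∈ Ioo (b - 1) b, f t ≤ f (b - 1) + |f (b - 1) - f (b - 2)| := by
    rintro t ⟨ht₁, ht₂⟩
    have hslope := hf.slope_anti_adjacent (x := b - 2) (y := b - 1) (z := t)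
      (by simp only [mem_Iio]; linarith) ht₂ (by linarith) ht₁
    rw [show b - 1 - (b - 2) = 1 by ring, div_one, div_le_iff₀ (by linarith)] at hslope
    have hlen : t - (b - 1) ≤ 1 := by linarith
    nlinarith [le_abs_self (f (b - 1) - f (b - 2)), abs_nonneg (f (b - 1) - f (b - 2))]
  obtain ⟨t, htM, htI⟩ := ((htop.eventually_gt_atTop (f (b - 1) + |f (b - 1) - f (b - 2)|)).and
    (Ioo_mem_nhdsLT (by linarith : b - 1 < b))).exists
  exact (hbound t htI).not_gt htM

theorem tendsto_atTop_nhdsLT_one_of_rightInverse {F g : ℝ → ℝ} (hF : Monotone F)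
    (hlt : ∀ x, F x < 1) (hg : ∀ v ∈ Ioo (0 : ℝ) 1, F (g v) = v) :
    Tendsto g (𝓝[<] 1) atTop := by
  refine tendsto_atTop.2 fun M => ?_
  filter_upwards [Ioo_mem_nhdsLT (zero_lt_one' ℝ), Ioo_mem_nhdsLT (hlt M)] with v hv hvM
  by_contra! h
  have := hF h.le
  rw [hg v hv] at this
  exact this.not_gt hvM.1

lemma phi_pos (t : ℝ) : 0 < phi t := by
  unfold phi
  positivity

lemma continuous_phi : Continuous phi := by
  unfold phi
  fun_prop

lemma integrable_phi : Integrable phi := by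
  have h := (integrable_exp_neg_mul_sq (by norm_num : (0 : ℝ) < 1 / 2)).const_mul
    (Real.sqrt (2 * Real.pi))⁻¹
  convert h using 2 with x
  unfold phi
  ring_nf

lemma integral_phi : ∫ x, phi x = 1 := by
  have hexp : ∀ x : ℝ, Real.exp (-x ^ 2 / 2) = Real.exp (-(1 / 2 : ℝ) * x ^ 2) := fun x => by
    ring_nf
  unfold phi
  rw [integral_const_mul]
  simp_rw [hexp, integral_gaussian, show π / (1 / 2) = 2 * π by ring]
  exact inv_mul_cancel₀ (by positivity)

lemma Phi_sub_Phi (a t : ℝ) : Phi t - Phi a = ∫ x in a..t, phi x :=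
  intervalIntegral.integral_Iic_sub_Iic integrable_phi.integrableOn integrable_phi.integrableOn

lemma Phi_strictMono : StrictMono Phi := fun a t hat => by
  have h : 0 < ∫ x in a..t, phi x :=
    intervalIntegral.intervalIntegral_pos_of_pos integrable_phi.intervalIntegrable phi_pos hat
  linarith [Phi_sub_Phi a t]

lemma Phi_pos (t : ℝ) : 0 < Phi t :=
  (setIntegral_nonneg measurableSet_Iic fun x _ => (phi_pos x).le).trans_lt
    (Phi_strictMono (sub_one_lt t))

lemma Phi_lt_one (t : ℝ) : Phi t < 1 :=
  (Phi_strictMono (lt_add_one t)).trans_le <| integral_phi ▸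
    setIntegral_le_integral integrable_phi (Eventually.of_forall fun x => (phi_pos x).le)

lemma continuous_Phi : Continuous Phi := by
  have h : Phi = fun t => Phi 0 + ∫ x in (0 : ℝ)..t, phi x := by
    ext t
    linarith [Phi_sub_Phi 0 t]
  rw [h]
  exact continuous_const.add (intervalIntegral.continuous_primitive
    (fun _ _ => integrable_phi.intervalIntegrable) 0)

lemma tendsto_Phi_div_Phi_nhdsLT (b : ℝ) :
    Tendsto (fun t => Phi t / Phi b) (𝓝[<] b) (𝓝[<] 1) := by
  refine tendsto_nhdsWithin_iff.2 ⟨?_, ?_⟩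
  · simpa [div_self (Phi_pos b).ne'] using
      ((continuous_Phi.tendsto b).mono_left nhdsWithin_le_nhds).div_const (Phi b)
  · filter_upwards [self_mem_nhdsWithin] with t ht
    exact (div_lt_one (Phi_pos b)).2 (Phi_strictMono ht)

theorem stmt_12_general (Φinv : ℝ → ℝ)
    (hinv : ∀ v ∈ Set.Ioo (0:ℝ) 1, Phi (Φinv v) = v) :
    ∀ b : ℝ, ¬ ConcaveOn ℝ (Set.Iio b) (fun t => Φinv (Phi t / Phi b)) := fun b hconc =>
  hconc.not_tendsto_atTop_nhdsLT <|
    (tendsto_atTop_nhdsLT_one_of_rightInverse Phi_strictMono.monotone Phi_lt_one hinv).comp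
      (tendsto_Phi_div_Phi_nhdsLT b)

/-- For every fixed b, the function `t ↦ Φ⁻¹(Φ(t)/Φ(b))` is not concave on `(-∞, b)`. -/
theorem stmt_12 (Φinv : ℝ → ℝ)
    (hinv : ∀ v ∈ Set.Ioo (0:ℝ) 1, Phi (Φinv v) = v)
    (hinv' : ∀ t : ℝ, Φinv (Phi t) = t) :
    ∀ b : ℝ, ¬ ConcaveOn ℝ (Set.Iio b) (fun t => Φinv (Phi t / Phi b)) :=
  stmt_12_general Φinv hinv
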